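/- arXiv:1312.2574 — 5 statements merged into one kernel-verified Lean document; each statement's English description precedes it below -/
import Mathlib

section
/- Let Z be a real random variable such that P(|Z − E[Z]| > y/n) ≤ c₁ exp(−c₂ y) for all y > 0, with c₁ > 0 and c₂ > 1 and n a positive integer. Then (1/n) log E[exp(n Z)] − (1/n) log(1 + c₁/(c₂ − 1)) ≤ E[Z] ≤ (1/n) log E[exp(n Z)]. -/
/-!
The upper bound is Jensen's inequality for `exp`. For the lower bound, the layer-cake formula
writes `E[e^{n(Z - EZ)}]` as `∫₀^∞ P(e^{n(Z - EZ)} > t) dt`. The integrand is at most `1` for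
`t ≤ 1`, and at most `c₁ t^{-c₂}` for `t > 1` by the tail hypothesis at `y = log t`; integrating,
`E[e^{n(Z - EZ)}] ≤ 1 + c₁/(c₂ - 1)`, and taking logarithms gives the claim.
-/

open MeasureTheory Real Set

noncomputable def powTailBound (c₁ c₂ t : ℝ) : ℝ := if t ≤ 1 then 1 else c₁ * t ^ (-c₂)

section powTailBound

variable {c₁ c₂ : ℝ}

lemma powTailBound_of_le_one {t : ℝ} (ht : t ≤ 1) : powTailBound c₁ c₂ t = 1 := if_pos ht

lemma powTailBound_of_one_lt {t : ℝ} (ht : 1 < t) : powTailBound c₁ c₂ t = c₁ * t ^ (-c₂) :=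
  if_neg ht.not_ge

lemma integrableOn_Ioc_powTailBound : IntegrableOn (powTailBound c₁ c₂) (Ioc 0 1) :=
  (integrableOn_const measure_Ioc_lt_top.ne).congr_fun
    (fun _ ht => (powTailBound_of_le_one ht.2).symm) measurableSet_Ioc

lemma integrableOn_Ioi_powTailBound (hc₂ : 1 < c₂) : IntegrableOn (powTailBound c₁ c₂) (Ioi 1) :=
  IntegrableOn.congr_fun
    ((integrableOn_Ioi_rpow_of_lt (a := -c₂) (by linarith) one_pos).const_mul c₁)
    (fun _ ht => (powTailBound_of_one_lt ht).symm) measurableSet_Ioi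

lemma integrableOn_powTailBound (hc₂ : 1 < c₂) : IntegrableOn (powTailBound c₁ c₂) (Ioi 0) := by
  rw [← Ioc_union_Ioi_eq_Ioi zero_le_one]
  exact integrableOn_Ioc_powTailBound.union (integrableOn_Ioi_powTailBound hc₂)

lemma integral_powTailBound (hc₂ : 1 < c₂) :
    ∫ t in Ioi 0, powTailBound c₁ c₂ t = 1 + c₁ / (c₂ - 1) := by
  rw [← Ioc_union_Ioi_eq_Ioi zero_le_one, setIntegral_union (Ioc_disjoint_Ioi le_rfl)
    measurableSet_Ioi integrableOn_Ioc_powTailBound (integrableOn_Ioi_powTailBound hc₂),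
    setIntegral_congr_fun measurableSet_Ioc (fun _ ht => powTailBound_of_le_one ht.2),
    setIntegral_congr_fun measurableSet_Ioi (fun _ ht => powTailBound_of_one_lt ht),
    integral_const_mul, integral_Ioi_rpow_of_lt (by linarith) one_pos, one_rpow]
  have : -c₂ + 1 ≠ 0 := by linarith
  have : c₂ - 1 ≠ 0 := by linarith
  simp only [integral_const, MeasurableSet.univ, measureReal_restrict_apply, univ_inter,
    volume_real_Ioc, sub_zero, zero_le_one, sup_of_le_left, smul_eq_mul, mul_one, add_right_inj]
  field_simp
  ring

end powTailBound

section ProbabilityMeasure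

variable {Ω : Type*} [MeasurableSpace Ω] {μ : Measure Ω} [IsProbabilityMeasure μ]

theorem exp_integral_le_integral_exp {X : Ω → ℝ} (hX : Integrable X μ)
    (hexp : Integrable (fun ω => exp (X ω)) μ) :
    exp (∫ ω, X ω ∂μ) ≤ ∫ ω, exp (X ω) ∂μ :=
  convexOn_exp.map_integral_le continuous_exp.continuousOn isClosed_univ (by simp) hX hexp

theorem integral_le_log_integral_exp {X : Ω → ℝ} (hX : Integrable X μ)
    (hexp : Integrable (fun ω => exp (X ω)) μ) :
    ∫ ω, X ω ∂μ ≤ log (∫ ω, exp (X ω) ∂μ) :=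
  (le_log_iff_exp_le (integral_exp_pos hexp)).2 (exp_integral_le_integral_exp hX hexp)

variable {Y : Ω → ℝ} {c₁ c₂ : ℝ}

lemma measureReal_lt_exp_le_powTailBound
    (htail : ∀ y, 0 < y → μ.real {ω | y < Y ω} ≤ c₁ * exp (-c₂ * y)) {t : ℝ} (ht : 0 < t) :
    μ.real {ω | t < exp (Y ω)} ≤ powTailBound c₁ c₂ t := by
  rcases le_or_gt t 1 with ht1 | ht1
  · rw [powTailBound_of_le_one ht1]
    exact measureReal_le_one
  · have hset : {ω | t < exp (Y ω)} = {ω | log t < Y ω} := by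
      ext ω; exact (log_lt_iff_lt_exp ht).symm
    rw [powTailBound_of_one_lt ht1, hset, rpow_def_of_pos ht, mul_comm (log t)]
    exact htail _ (log_pos ht1)

theorem integral_exp_le_of_measureReal_lt_le (hexp : Integrable (fun ω => exp (Y ω)) μ)
    (hc₂ : 1 < c₂) (htail : ∀ y, 0 < y → μ.real {ω | y < Y ω} ≤ c₁ * exp (-c₂ * y)) :
    ∫ ω, exp (Y ω) ∂μ ≤ 1 + c₁ / (c₂ - 1) := by
  rw [hexp.integral_eq_integral_meas_lt (.of_forall fun ω => (exp_pos _).le),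
    ← integral_powTailBound hc₂]
  exact integral_mono_of_nonneg (.of_forall fun _ => measureReal_nonneg)
    (integrableOn_powTailBound hc₂) ((ae_restrict_iff' measurableSet_Ioi).2
      (.of_forall fun _ ht => measureReal_lt_exp_le_powTailBound htail ht))

end ProbabilityMeasure

theorem stmt_2_general {Ω : Type*} [MeasurableSpace Ω] (μ : Measure Ω) [IsProbabilityMeasure μ]
    (Z : Ω → ℝ) (hZint : Integrable Z μ)
    (n : ℕ) (hn : 1 ≤ n)
    (hexpint : Integrable (fun ω => Real.exp ((n : ℝ) * Z ω)) μ)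
    (c₁ c₂ : ℝ) (hc₂ : 1 < c₂)
    (htail : ∀ y : ℝ, 0 < y →
      (μ {ω | y / n < |Z ω - ∫ ω', Z ω' ∂μ|}).toReal ≤ c₁ * Real.exp (-c₂ * y)) :
    (1 / n : ℝ) * Real.log (∫ ω, Real.exp ((n : ℝ) * Z ω) ∂μ)
        - (1 / n : ℝ) * Real.log (1 + c₁ / (c₂ - 1)) ≤ ∫ ω, Z ω ∂μ ∧
    ∫ ω, Z ω ∂μ ≤ (1 / n : ℝ) * Real.log (∫ ω, Real.exp ((n : ℝ) * Z ω) ∂μ) := by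
  set m := ∫ ω, Z ω ∂μ
  set I := ∫ ω, exp ((n : ℝ) * Z ω) ∂μ
  have hn₀ : (0 : ℝ) < n := Nat.cast_pos.2 hn
  have hI : 0 < I := integral_exp_pos hexpint
  have hshift : (fun ω => exp (n * (Z ω - m))) = fun ω => exp (-(n * m)) * exp (n * Z ω) := by
    ext ω; rw [← exp_add]; ring_nf
  have hcentered_tail : ∀ y, 0 < y → μ.real {ω | y < n * (Z ω - m)} ≤ c₁ * exp (-c₂ * y) :=
    fun y hy => (measureReal_mono fun ω (hω : y < n * (Z ω - m)) =>
      ((div_lt_iff₀' hn₀).2 hω).trans_le (le_abs_self _)).trans (htail y hy)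
  have hcentered : exp (-(n * m)) * I ≤ 1 + c₁ / (c₂ - 1) := by
    rw [← integral_const_mul, ← hshift]
    exact integral_exp_le_of_measureReal_lt_le (hshift ▸ hexpint.const_mul _) hc₂ hcentered_tail
  have hlower : log I - n * m ≤ log (1 + c₁ / (c₂ - 1)) := by
    have := log_le_log (mul_pos (exp_pos _) hI) hcentered
    rwa [log_mul (exp_pos _).ne' hI.ne', log_exp, neg_add_eq_sub] at this
  have hupper : n * m ≤ log I := by
    simpa only [integral_const_mul] using integral_le_log_integral_exp (hZint.const_mul n) hexpint
  constructor
  · rw [← mul_sub, one_div_mul_eq_div, div_le_iff₀ hn₀]; linarith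
  · rw [one_div_mul_eq_div, le_div_iff₀ hn₀]; linarith

theorem stmt_2 {Ω : Type*} [MeasurableSpace Ω] (μ : Measure Ω) [IsProbabilityMeasure μ]
    (Z : Ω → ℝ) (hZm : Measurable Z) (hZint : Integrable Z μ)
    (n : ℕ) (hn : 1 ≤ n)
    (hexpint : Integrable (fun ω => Real.exp ((n : ℝ) * Z ω)) μ)
    (c₁ c₂ : ℝ) (hc₁ : 0 < c₁) (hc₂ : 1 < c₂)
    (htail : ∀ y : ℝ, 0 < y →
      (μ {ω | y / n < |Z ω - ∫ ω', Z ω' ∂μ|}).toReal ≤ c₁ * Real.exp (-c₂ * y)) :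
    (1 / n : ℝ) * Real.log (∫ ω, Real.exp ((n : ℝ) * Z ω) ∂μ)
        - (1 / n : ℝ) * Real.log (1 + c₁ / (c₂ - 1)) ≤ ∫ ω, Z ω ∂μ ∧
    ∫ ω, Z ω ∂μ ≤ (1 / n : ℝ) * Real.log (∫ ω, Real.exp ((n : ℝ) * Z ω) ∂μ) :=
  stmt_2_general μ Z hZint n hn hexpint c₁ c₂ hc₂ htail
end

section
/- Let M be an n × m random matrix with independent complex entries of zero mean and unit variance, and let s ⊆ {1,…,n} with |s| = l ≤ m. Then E[det((M M*)_{s,s})] = C(m,l) · l!, where (M M*)_{s,s} is the principal submatrix of M M* with rows and columns indexed by s. -/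
/-!
Expanding the determinant and the matrix product,
`det (M Mᴴ)_{s,s} = ∑ σ, sign σ * ∑ c : s → [m], ∏ i, M i (c (σ⁻¹ i)) * conj (M i (c i))`.
Grouping each monomial by entries and using independence, mean zero and unit variance, its
expectation is `1` if `c ∘ σ⁻¹ = c` and `0` otherwise. For fixed `c` the signed count of such `σ`
is the determinant of the `0/1` matrix `[c i = c j]`, which is `1` if `c` is injective and `0`
otherwise (two equal rows). Hence the expectation is the number of injections `s → [m]`,
namely `m (m - 1) ⋯ (m - l + 1) = C(m, l) l!`.
-/

open MeasureTheory ProbabilityTheory Matrix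

open Equiv Finset in
theorem Matrix.det_mul_conjTranspose_eq_sum {ι κ R : Type*} [Fintype ι] [DecidableEq ι]
    [Fintype κ] [CommRing R] [StarRing R] (A : Matrix ι κ R) :
    (A * Aᴴ).det = ∑ σ : Perm ι, (Perm.sign σ : R) *
      ∑ c : ι → κ, ∏ i, A i (c (σ⁻¹ i)) * star (A i (c i)) := by
  simp only [det_apply', mul_apply, conjTranspose_apply, prod_univ_sum, Fintype.piFinset_univ,
    prod_mul_distrib]
  refine sum_congr rfl fun σ _ => congrArg _ <| sum_congr rfl fun c _ => ?_
  rw [← Equiv.prod_comp σ fun i => A i (c (σ⁻¹ i))]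
  simp

theorem Matrix.det_of_ite_apply_eq {ι κ R : Type*} [Fintype ι] [DecidableEq ι] [DecidableEq κ]
    [CommRing R] (c : ι → κ) :
    (of fun i j => if c i = c j then (1 : R) else 0).det =
      if Function.Injective c then 1 else 0 := by
  split_ifs with hc
  · convert det_one (R := R) (n := ι)
    ext i j
    simp [one_apply, hc.eq_iff]
  · obtain ⟨i, j, hcij, hij⟩ : ∃ i j, c i = c j ∧ i ≠ j := by
      simpa [Function.Injective] using hc
    exact det_zero_of_row_eq hij (funext fun k => by simp [hcij])

theorem sum_sign_mul_prod_ite_apply_eq {ι κ R : Type*} [Fintype ι] [DecidableEq ι]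
    [DecidableEq κ] [CommRing R] (c : ι → κ) :
    ∑ σ : Equiv.Perm ι, (Equiv.Perm.sign σ : R) * ∏ i, (if c (σ⁻¹ i) = c i then 1 else 0) =
      if Function.Injective c then 1 else 0 := by
  rw [← det_of_ite_apply_eq c, det_apply', ← Equiv.sum_comp (Equiv.inv (Equiv.Perm ι))]
  simp

theorem sum_ite_injective_eq_descFactorial {ι κ R : Type*} [Fintype ι] [DecidableEq ι]
    [Fintype κ] [DecidableEq κ] [AddCommMonoidWithOne R] :
    ∑ c : ι → κ, (if Function.Injective c then (1 : R) else 0) =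
      (Fintype.card κ).descFactorial (Fintype.card ι) := by
  rw [Finset.sum_boole, ← Fintype.card_subtype,
    Fintype.card_congr (Equiv.subtypeInjectiveEquivEmbedding ι κ), Fintype.card_embedding_eq]

theorem ProbabilityTheory.iIndepFun.integrable_finsetProd {Ω ι 𝕜 : Type*} [MeasurableSpace Ω]
    {μ : Measure Ω} [RCLike 𝕜] {X : ι → Ω → 𝕜} (hX : iIndepFun X μ)
    (hmeas : ∀ i, Measurable (X i)) (hint : ∀ i, Integrable (X i) μ) (s : Finset ι) :
    Integrable (∏ i ∈ s, X i) μ := by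
  have := hX.isProbabilityMeasure
  induction s using Finset.cons_induction with
  | empty => exact Finset.prod_empty (f := X) ▸ integrable_const 1
  | cons j s hj ih =>
    rw [Finset.prod_cons, mul_comm]
    exact (hX.indepFun_finsetProd_of_notMem hmeas hj).integrable_mul ih (hint j)

theorem MeasureTheory.memLp_two_of_integral_norm_sq_eq_one {Ω F : Type*} [MeasurableSpace Ω]
    {μ : Measure Ω} [NormedAddCommGroup F] {Y : Ω → F} (hY : AEStronglyMeasurable Y μ)
    (h : ∫ ω, ‖Y ω‖ ^ 2 ∂μ = 1) : MemLp Y 2 μ :=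
  (memLp_two_iff_integrable_sq_norm hY).2 (integrable_of_integral_eq_one h)

section RandomMatrix

variable {Ω ι κ : Type*} [MeasurableSpace Ω] {μ : Measure Ω}

section EntryFactor

variable [DecidableEq κ]

/-- The monomial `∏ i, z i (a i) * conj (z i (b i))` grouped by entries is
`∏ p, entryFactor a b p (z p.1 p.2)`, a product of functions of independent variables. -/
def entryFactor (a b : ι → κ) (p : ι × κ) (z : ℂ) : ℂ :=
  (if a p.1 = p.2 then z else 1) * (if b p.1 = p.2 then star z else 1)

theorem measurable_entryFactor (a b : ι → κ) (p : ι × κ) : Measurable (entryFactor a b p) := by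
  unfold entryFactor
  split_ifs <;> fun_prop

theorem MeasureTheory.MemLp.integrable_entryFactor [IsFiniteMeasure μ] {Y : Ω → ℂ}
    (hY : MemLp Y 2 μ) (a b : ι → κ) (p : ι × κ) :
    Integrable (fun ω => entryFactor a b p (Y ω)) μ := by
  unfold entryFactor
  split_ifs
  · exact hY.integrable_mul hY.star
  · simpa only [mul_one] using hY.integrable one_le_two
  · simp only [one_mul]
    exact hY.star.integrable one_le_two
  · simp

theorem prod_mul_star_eq_prod_entryFactor [Fintype ι] [Fintype κ] (A : Matrix ι κ ℂ)
    (a b : ι → κ) :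
    ∏ i, A i (a i) * star (A i (b i)) = ∏ p : ι × κ, entryFactor a b p (A p.1 p.2) := by
  rw [Fintype.prod_prod_type]
  refine Fintype.prod_congr _ _ fun i => ?_
  simp only [entryFactor, Finset.prod_mul_distrib, Finset.prod_ite_eq, Finset.mem_univ, if_true]

theorem prod_integral_entryFactor [Fintype κ] [IsProbabilityMeasure μ] {X : Ω → Matrix ι κ ℂ}
    (hmean : ∀ i j, ∫ ω, X ω i j ∂μ = 0) (hvar : ∀ i j, ∫ ω, ‖X ω i j‖ ^ 2 ∂μ = 1)
    (a b : ι → κ) (i : ι) :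
    ∏ j, ∫ ω, entryFactor a b (i, j) (X ω i j) ∂μ = if a i = b i then 1 else 0 := by
  split_ifs with hab
  · refine Finset.prod_eq_one fun j _ => ?_
    by_cases hj : a i = j
    · have hj' : b i = j := hab ▸ hj
      simp only [entryFactor, hj, hj', if_true, Complex.star_def, Complex.mul_conj,
        Complex.normSq_eq_norm_sq]
      exact_mod_cast (integral_ofReal (𝕜 := ℂ)).trans (congrArg _ (hvar i j))
    · simp [entryFactor, hj, hab ▸ hj]
  · refine Finset.prod_eq_zero (Finset.mem_univ (a i)) ?_
    simp [entryFactor, Ne.symm hab, hmean]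

end EntryFactor

variable [Fintype ι] [Fintype κ] {X : Ω → Matrix ι κ ℂ}

theorem integrable_prod_mul_star (hmeas : ∀ i j, Measurable fun ω => X ω i j)
    (hindep : iIndepFun (fun (p : ι × κ) ω => X ω p.1 p.2) μ)
    (hvar : ∀ i j, ∫ ω, ‖X ω i j‖ ^ 2 ∂μ = 1) (a b : ι → κ) :
    Integrable (fun ω => ∏ i, X ω i (a i) * star (X ω i (b i))) μ := by
  classical
  have := hindep.isProbabilityMeasure
  simp_rw [prod_mul_star_eq_prod_entryFactor]
  simpa only [Finset.prod_fn, Function.comp_apply] using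
    (hindep.comp _ fun p => measurable_entryFactor a b p).integrable_finsetProd
      (fun p => (measurable_entryFactor a b p).comp (hmeas p.1 p.2))
      (fun p => (memLp_two_of_integral_norm_sq_eq_one (hmeas p.1 p.2).aestronglyMeasurable
        (hvar p.1 p.2)).integrable_entryFactor a b p) Finset.univ

theorem integral_prod_mul_star [DecidableEq κ] (hmeas : ∀ i j, Measurable fun ω => X ω i j)
    (hindep : iIndepFun (fun (p : ι × κ) ω => X ω p.1 p.2) μ)
    (hmean : ∀ i j, ∫ ω, X ω i j ∂μ = 0) (hvar : ∀ i j, ∫ ω, ‖X ω i j‖ ^ 2 ∂μ = 1)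
    (a b : ι → κ) :
    ∫ ω, ∏ i, X ω i (a i) * star (X ω i (b i)) ∂μ = ∏ i, if a i = b i then 1 else 0 := by
  have := hindep.isProbabilityMeasure
  simp_rw [prod_mul_star_eq_prod_entryFactor]
  rw [hindep.integral_fun_prod_comp (fun p => (hmeas p.1 p.2).aemeasurable)
    fun p => (measurable_entryFactor a b p).aestronglyMeasurable, Fintype.prod_prod_type]
  exact Fintype.prod_congr _ _ (prod_integral_entryFactor hmean hvar a b)

theorem integral_det_mul_conjTranspose [DecidableEq ι]
    (hmeas : ∀ i j, Measurable fun ω => X ω i j)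
    (hindep : iIndepFun (fun (p : ι × κ) ω => X ω p.1 p.2) μ)
    (hmean : ∀ i j, ∫ ω, X ω i j ∂μ = 0) (hvar : ∀ i j, ∫ ω, ‖X ω i j‖ ^ 2 ∂μ = 1) :
    ∫ ω, (X ω * (X ω)ᴴ).det ∂μ = (Fintype.card κ).descFactorial (Fintype.card ι) := by
  classical
  have hint := integrable_prod_mul_star hmeas hindep hvar
  calc ∫ ω, (X ω * (X ω)ᴴ).det ∂μ
      = ∑ σ : Equiv.Perm ι, (Equiv.Perm.sign σ : ℂ) *
          ∑ c : ι → κ, ∫ ω, ∏ i, X ω i (c (σ⁻¹ i)) * star (X ω i (c i)) ∂μ := by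
        simp_rw [det_mul_conjTranspose_eq_sum]
        rw [integral_finsetSum _ fun σ _ => (integrable_finsetSum _ fun c _ => hint _ _).const_mul _]
        simp_rw [integral_const_mul, integral_finsetSum _ fun c _ => hint _ _]
    _ = ∑ c : ι → κ, ∑ σ : Equiv.Perm ι, (Equiv.Perm.sign σ : ℂ) *
          ∏ i, (if c (σ⁻¹ i) = c i then 1 else 0) := by
        rw [Finset.sum_comm]
        refine Finset.sum_congr rfl fun σ _ => ?_
        rw [Finset.mul_sum]
        refine Finset.sum_congr rfl fun c _ => ?_
        rw [integral_prod_mul_star hmeas hindep hmean hvar (fun i => c (σ⁻¹ i)) c]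
    _ = (Fintype.card κ).descFactorial (Fintype.card ι) := by
        simp_rw [sum_sign_mul_prod_ite_apply_eq]
        exact sum_ite_injective_eq_descFactorial

end RandomMatrix

theorem stmt_6_general {Ω : Type*} [MeasurableSpace Ω] (μ : Measure Ω)
    (n m l : ℕ)
    (M : Ω → Matrix (Fin n) (Fin m) ℂ)
    (hmeas : ∀ i j, Measurable (fun ω => M ω i j))
    (hindep : iIndepFun
      (fun (p : Fin n × Fin m) ω => M ω p.1 p.2) μ)
    (hmean : ∀ i j, ∫ ω, M ω i j ∂μ = 0)
    (hvar : ∀ i j, ∫ ω, ‖M ω i j‖ ^ 2 ∂μ = 1)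
    (s : Finset (Fin n)) (hs : s.card = l) :
    ∫ ω, ((M ω * (M ω)ᴴ).submatrix (fun i : ↥s => (i : Fin n))
        (fun j : ↥s => (j : Fin n))).det ∂μ
      = (m.choose l : ℂ) * (l.factorial : ℂ) := by
  set N : Ω → Matrix s (Fin m) ℂ := fun ω => (M ω).submatrix (↑) id
  have hN : ∀ ω, (M ω * (M ω)ᴴ).submatrix (↑) (↑) = N ω * (N ω)ᴴ := fun ω => by
    rw [submatrix_mul _ _ _ id _ Function.bijective_id, conjTranspose_submatrix]
  have hNindep : iIndepFun (fun (p : s × Fin m) ω => N ω p.1 p.2) μ :=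
    hindep.precomp (g := Prod.map Subtype.val id)
      (Subtype.val_injective.prodMap Function.injective_id)
  simp_rw [hN, integral_det_mul_conjTranspose (X := N) (fun i j => hmeas i j) hNindep
    (fun i j => hmean i j) (fun i j => hvar i j), Fintype.card_coe, Fintype.card_fin, hs,
    Nat.descFactorial_eq_factorial_mul_choose]
  push_cast
  ring

theorem stmt_6 {Ω : Type*} [MeasurableSpace Ω] (μ : Measure Ω) [IsProbabilityMeasure μ]
    (n m l : ℕ) (hlm : l ≤ m)
    (M : Ω → Matrix (Fin n) (Fin m) ℂ)
    (hmeas : ∀ i j, Measurable (fun ω => M ω i j))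
    (hindep : iIndepFun
      (fun (p : Fin n × Fin m) ω => M ω p.1 p.2) μ)
    (hmean : ∀ i j, ∫ ω, M ω i j ∂μ = 0)
    (hvar : ∀ i j, ∫ ω, ‖M ω i j‖ ^ 2 ∂μ = 1)
    (s : Finset (Fin n)) (hs : s.card = l) :
    ∫ ω, ((M ω * (M ω)ᴴ).submatrix (fun i : ↥s => (i : Fin n))
        (fun j : ↥s => (j : Fin n))).det ∂μ
      = (m.choose l : ℂ) * (l.factorial : ℂ) :=
  stmt_6_general μ n m l M hmeas hindep hmean hvar s hs
end

section
/- For all real α ≥ 1 and 0 ≤ δ ≤ 1 with 0 < (1−δ)/α ≤ 1/α < 1, one has H((1−δ)/α) − H(1/α) ≤ (1/α) H(δ). -/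
noncomputable def binH (x : ℝ) : ℝ := -x * Real.log x - (1 - x) * Real.log (1 - x)

lemma binH_key (a δ : ℝ) (ha0 : 0 < a) (ha1 : a < 1) (hδ0 : 0 ≤ δ) (hδ1 : δ < 1) :
    binH ((1 - δ) * a) - binH a ≤ binH δ * a := by
  rcases eq_or_lt_of_le hδ0 with h | hδpos
  · simp [binH, ← h, Real.log_one]
  · unfold binH
    have h1δ : 0 < 1 - δ := by linarith
    have e1 : Real.log ((1 - δ) * a) = Real.log (1 - δ) + Real.log a :=
      Real.log_mul (by positivity) (by positivity)
    have e2 : Real.log (1 - (1 - δ) * a) = Real.log (1 - a + a * δ) := by ring_nf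
    have hu : 0 < 1 - a + a * δ := by nlinarith
    have h1 : 0 ≤ (1 - a) * (Real.log (1 - a + a * δ) - Real.log (1 - a)) := by
      have : Real.log (1 - a) ≤ Real.log (1 - a + a * δ) :=
        Real.log_le_log (by linarith) (by nlinarith)
      nlinarith
    have h2 : 0 ≤ (a * δ) * (Real.log (1 - a + a * δ) - (Real.log a + Real.log δ)) := by
      have e3 : Real.log a + Real.log δ = Real.log (a * δ) := (Real.log_mul (ne_of_gt ha0) (ne_of_gt hδpos)).symm
      have h4 : Real.log (a * δ) ≤ Real.log (1 - a + a * δ) :=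
        Real.log_le_log (by positivity) (by nlinarith)
      rw [e3]
      exact mul_nonneg (by positivity) (by linarith)
    rw [e1, e2]
    nlinarith [h1, h2]

theorem stmt_10 (α δ : ℝ) (hα : 1 ≤ α) (hδ0 : 0 ≤ δ) (hδ1 : δ ≤ 1)
    (hpos : 0 < (1 - δ) / α) (hlt : 1 / α < 1) :
    binH ((1 - δ) / α) - binH (1 / α) ≤ binH δ / α := by
  have hα0 : 0 < α := by linarith
  have ha0 : 0 < 1 / α := by positivity
  have ha1 : 1 / α < 1 := hlt
  have hδlt : δ < 1 := by
    have h := mul_pos hpos hα0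
    rw [div_mul_cancel₀ _ (ne_of_gt hα0)] at h
    linarith
  have e1 : (1 - δ) / α = (1 - δ) * (1 / α) := by ring
  have e2 : binH δ / α = binH δ * (1 / α) := by ring
  rw [e1, e2]
  exact binH_key (1 / α) δ ha0 ha1 hδ0 hδlt
end

section
/- Define g_ε : [0,∞) → ℝ by g_ε(x) = log(ε + x²) for x ≥ √ε and g_ε(x) = (x − √ε)/√ε + log(2ε) for 0 ≤ x < √ε, where ε > 0. Then g_ε is concave on [0,∞), Lipschitz with constant at most 1/√ε, and setting f_ε(x) := g_ε(√x) for x ≥ 0, one has log((2/e)ε + x) ≤ f_ε(x) ≤ log(ε + x) for all x ≥ 0. -/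
open Real

private lemma hasDerivAt_logsq (ε : ℝ) (hε : 0 < ε) (z : ℝ) :
    HasDerivAt (fun t : ℝ => Real.log (ε + t ^ 2)) (2 * z / (ε + z ^ 2)) z := by
  have h1 : HasDerivAt (fun t : ℝ => ε + t ^ 2) (2 * z) z := by
    simpa using (hasDerivAt_pow 2 z).const_add ε
  have hpos : (0 : ℝ) < ε + z ^ 2 := by positivity
  exact h1.log hpos.ne'

/-- Tangent line of `log (ε + x²)` at a point `y ≥ √ε` lies above the function on `[√ε, ∞)`. -/
private lemma tangent_aux (ε : ℝ) (hε : 0 < ε) {x y : ℝ}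
    (hy : Real.sqrt ε ≤ y) (hx : Real.sqrt ε ≤ x) :
    Real.log (ε + x ^ 2) ≤ Real.log (ε + y ^ 2) + 2 * y / (ε + y ^ 2) * (x - y) := by
  have hs : 0 < Real.sqrt ε := Real.sqrt_pos.2 hε
  have hs2 : Real.sqrt ε ^ 2 = ε := Real.sq_sqrt hε.le
  set s := Real.sqrt ε
  set m := 2 * y / (ε + y ^ 2) with hm
  set φ : ℝ → ℝ := fun z => Real.log (ε + y ^ 2) + m * (z - y) - Real.log (ε + z ^ 2) with hφ
  have hder : ∀ z : ℝ, HasDerivAt φ (m - 2 * z / (ε + z ^ 2)) z := by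
    intro z
    have h1 : HasDerivAt (fun z : ℝ => Real.log (ε + y ^ 2) + m * (z - y)) m z := by
      simpa using (((hasDerivAt_id z).sub_const y).const_mul m).const_add
        (Real.log (ε + y ^ 2))
    exact h1.sub (hasDerivAt_logsq ε hε z)
  have hcont : Continuous φ :=
    Differentiable.continuous (fun z => (hder z).differentiableAt)
  have hφy : φ y = 0 := by simp [hφ]
  have hyy : 0 < ε + y ^ 2 := by positivity
  suffices h : 0 ≤ φ x by
    simp only [hφ] at h; linarith
  rcases le_total x y with hxy | hxy
  · -- x ≤ y : φ is antitone on [s, y]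
    have key : AntitoneOn φ (Set.Icc s y) := by
      refine antitoneOn_of_deriv_nonpos (convex_Icc _ _) hcont.continuousOn
        (fun z _ => (hder z).differentiableAt.differentiableWithinAt) ?_
      intro z hz
      rw [interior_Icc] at hz
      rw [(hder z).deriv]
      have hz1 : s < z := hz.1
      have hz2 : z < y := hz.2
      have hzz : 0 < ε + z ^ 2 := by positivity
      have hεyz : ε ≤ z * y := by
        nlinarith [mul_nonneg (by linarith : (0:ℝ) ≤ z - s) (by linarith : (0:ℝ) ≤ y - s),
          mul_nonneg hs.le (by linarith : (0:ℝ) ≤ z - s),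
          mul_nonneg hs.le (by linarith : (0:ℝ) ≤ y - s)]
      have hkey : 2 * y * (ε + z ^ 2) ≤ 2 * z * (ε + y ^ 2) := by
        nlinarith [mul_nonneg (by linarith : (0:ℝ) ≤ y - z) (by linarith : (0:ℝ) ≤ z * y - ε)]
      rw [sub_nonpos, hm, div_le_div_iff₀ hyy hzz]
      linarith
    have := key ⟨hx, hxy⟩ ⟨hy, le_refl y⟩ hxy
    rw [hφy] at this; exact this
  · -- y ≤ x : φ is monotone on [y, x]
    have key : MonotoneOn φ (Set.Icc y x) := by
      refine monotoneOn_of_deriv_nonneg (convex_Icc _ _) hcont.continuousOn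
        (fun z _ => (hder z).differentiableAt.differentiableWithinAt) ?_
      intro z hz
      rw [interior_Icc] at hz
      have hz1 : y < z := hz.1
      rw [(hder z).deriv]
      have hzz : 0 < ε + z ^ 2 := by positivity
      have hεyz : ε ≤ y * z := by
        nlinarith [mul_nonneg (by linarith : (0:ℝ) ≤ y - s) (by linarith : (0:ℝ) ≤ z - s),
          mul_nonneg hs.le (by linarith : (0:ℝ) ≤ z - s),
          mul_nonneg hs.le (by linarith : (0:ℝ) ≤ y - s)]
      have hkey : 2 * z * (ε + y ^ 2) ≤ 2 * y * (ε + z ^ 2) := by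
        nlinarith [mul_nonneg (by linarith : (0:ℝ) ≤ z - y) (by linarith : (0:ℝ) ≤ y * z - ε)]
      rw [sub_nonneg, hm, div_le_div_iff₀ hzz hyy]
      linarith
    have := key ⟨le_refl y, hxy⟩ ⟨hxy, le_refl x⟩ hxy
    rw [hφy] at this; exact this

/-- The linear piece lies below `log (ε + r²)` on `[0, √ε]`. -/
private lemma below_aux (ε : ℝ) (hε : 0 < ε) {r : ℝ} (hr0 : 0 ≤ r) (hrs : r ≤ Real.sqrt ε) :
    (r - Real.sqrt ε) / Real.sqrt ε + Real.log (2 * ε) ≤ Real.log (ε + r ^ 2) := by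
  have hs : 0 < Real.sqrt ε := Real.sqrt_pos.2 hε
  have hs2 : Real.sqrt ε ^ 2 = ε := Real.sq_sqrt hε.le
  set s := Real.sqrt ε
  set ψ : ℝ → ℝ := fun z => Real.log (ε + z ^ 2) - z / s with hψ
  have hder : ∀ z : ℝ, HasDerivAt ψ (2 * z / (ε + z ^ 2) - 1 / s) z := by
    intro z
    exact (hasDerivAt_logsq ε hε z).sub (by simpa using (hasDerivAt_id z).div_const s)
  have hcont : Continuous ψ := Differentiable.continuous (fun z => (hder z).differentiableAt)
  have key : AntitoneOn ψ (Set.Icc 0 s) := by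
    refine antitoneOn_of_deriv_nonpos (convex_Icc _ _) hcont.continuousOn
      (fun z _ => (hder z).differentiableAt.differentiableWithinAt) ?_
    intro z hz
    rw [interior_Icc] at hz
    rw [(hder z).deriv]
    have hzz : 0 < ε + z ^ 2 := by positivity
    rw [sub_nonpos, div_le_div_iff₀ hzz hs]
    nlinarith [sq_nonneg (z - s), hz.1, hz.2]
  have hψs : ψ s = Real.log (2 * ε) - 1 := by
    have : ε + s ^ 2 = 2 * ε := by nlinarith
    simp [hψ, this, div_self hs.ne']
  have h := key ⟨hr0, hrs⟩ ⟨le_of_lt hs, le_refl s⟩ hrs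
  rw [hψs] at h
  have : (r - s) / s = r / s - 1 := by field_simp
  simp only [hψ] at h
  linarith

/-- Supporting line for `g` at every point of `[0, ∞)`. -/
private lemma support (ε : ℝ) (hε : 0 < ε) (g : ℝ → ℝ)
    (hg_above : ∀ x : ℝ, Real.sqrt ε ≤ x → g x = Real.log (ε + x ^ 2))
    (hg_below : ∀ x : ℝ, 0 ≤ x → x < Real.sqrt ε →
      g x = (x - Real.sqrt ε) / Real.sqrt ε + Real.log (2 * ε))
    (y : ℝ) (hy : 0 ≤ y) :
    ∃ c m : ℝ, 0 ≤ m ∧ m ≤ 1 / Real.sqrt ε ∧ g y = c + m * y ∧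
      ∀ x : ℝ, 0 ≤ x → g x ≤ c + m * x := by
  have hs : 0 < Real.sqrt ε := Real.sqrt_pos.2 hε
  have hs2 : Real.sqrt ε ^ 2 = ε := Real.sq_sqrt hε.le
  set s := Real.sqrt ε
  have htang_s : ∀ x : ℝ, s ≤ x →
      Real.log (ε + x ^ 2) ≤ (x - s) / s + Real.log (2 * ε) := by
    intro x hx
    have h := tangent_aux ε hε (le_refl s) hx
    have h1 : ε + s ^ 2 = 2 * ε := by nlinarith
    have h2 : 2 * s / (2 * ε) = 1 / s := by
      field_simp
      nlinarith
    rw [h1, h2] at h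
    calc Real.log (ε + x ^ 2) ≤ Real.log (2 * ε) + 1 / s * (x - s) := h
      _ = (x - s) / s + Real.log (2 * ε) := by ring
  by_cases hys : s ≤ y
  · -- tangent to the log piece
    have hyy : 0 < ε + y ^ 2 := by positivity
    refine ⟨Real.log (ε + y ^ 2) - 2 * y / (ε + y ^ 2) * y, 2 * y / (ε + y ^ 2),
      by positivity, ?_, by rw [hg_above y hys]; ring, ?_⟩
    · rw [div_le_div_iff₀ hyy hs]
      nlinarith [sq_nonneg (y - s)]
    · intro x hx
      by_cases hxs : s ≤ x
      · rw [hg_above x hxs]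
        have := tangent_aux ε hε hys hxs
        linarith
      · push_neg at hxs
        rw [hg_below x hx hxs]
        have h1 := tangent_aux ε hε hys (le_refl s)
        -- g x = (x-s)/s + log(2ε) ≤ log(ε+y²) + m(s-y) + (x-s)*m
        have hm1 : 2 * y / (ε + y ^ 2) ≤ 1 / s := by
          rw [div_le_div_iff₀ hyy hs]; nlinarith [sq_nonneg (y - s)]
        have hm0 : 0 ≤ 2 * y / (ε + y ^ 2) := by positivity
        have h2 : (x - s) / s ≤ 2 * y / (ε + y ^ 2) * (x - s) := by
          have hxs' : x - s ≤ 0 := by linarith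
          have : (x - s) / s = (1 / s) * (x - s) := by ring
          rw [this]
          nlinarith
        have h3 : ε + s ^ 2 = 2 * ε := by nlinarith
        rw [h3] at h1
        nlinarith
  · -- tangent is the linear piece itself
    push_neg at hys
    refine ⟨Real.log (2 * ε) - 1, 1 / s, by positivity, le_refl _, ?_, ?_⟩
    · rw [hg_below y hy hys]
      field_simp
      ring
    · intro x hx
      by_cases hxs : s ≤ x
      · rw [hg_above x hxs]
        have := htang_s x hxs
        have h2 : (x - s) / s = 1 / s * x - 1 := by field_simp
        linarith
      · push_neg at hxs
        rw [hg_below x hx hxs]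
        have h2 : (x - s) / s = 1 / s * x - 1 := by field_simp
        linarith

theorem stmt_13 (ε : ℝ) (hε : 0 < ε) (g : ℝ → ℝ)
    (hg_above : ∀ x : ℝ, Real.sqrt ε ≤ x → g x = Real.log (ε + x ^ 2))
    (hg_below : ∀ x : ℝ, 0 ≤ x → x < Real.sqrt ε →
      g x = (x - Real.sqrt ε) / Real.sqrt ε + Real.log (2 * ε)) :
    ConcaveOn ℝ (Set.Ici (0 : ℝ)) g ∧
    (∀ x ∈ Set.Ici (0 : ℝ), ∀ y ∈ Set.Ici (0 : ℝ),
      |g x - g y| ≤ |x - y| / Real.sqrt ε) ∧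
    (∀ x : ℝ, 0 ≤ x →
      Real.log (2 / Real.exp 1 * ε + x) ≤ g (Real.sqrt x) ∧
      g (Real.sqrt x) ≤ Real.log (ε + x)) := by
  have hs : 0 < Real.sqrt ε := Real.sqrt_pos.2 hε
  have hs2 : Real.sqrt ε ^ 2 = ε := Real.sq_sqrt hε.le
  set s := Real.sqrt ε with hsdef
  refine ⟨⟨convex_Ici 0, ?_⟩, ?_, ?_⟩
  · intro x hx y hy a b ha hb hab
    simp only [Set.mem_Ici] at hx hy
    simp only [smul_eq_mul]
    have hp : 0 ≤ a * x + b * y := add_nonneg (mul_nonneg ha hx) (mul_nonneg hb hy)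
    obtain ⟨c, m, _, _, heq, hle⟩ := support ε hε g hg_above hg_below _ hp
    have h1 := mul_le_mul_of_nonneg_left (hle x hx) ha
    have h2 := mul_le_mul_of_nonneg_left (hle y hy) hb
    have h3 : a * (c + m * x) + b * (c + m * y) = c + m * (a * x + b * y) := by
      linear_combination c * hab
    rw [heq]
    linarith
  · intro x hx y hy
    simp only [Set.mem_Ici] at hx hy
    obtain ⟨cx, mx, hmx0, hmx1, heqx, hlex⟩ := support ε hε g hg_above hg_below x hx
    obtain ⟨cy, my, hmy0, hmy1, heqy, hley⟩ := support ε hε g hg_above hg_below y hy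
    rw [abs_sub_le_iff]
    constructor
    · have h1 : g x - g y ≤ my * (x - y) := by
        have := hley x hx; rw [heqy]; linarith
      calc g x - g y ≤ my * (x - y) := h1
        _ ≤ my * |x - y| := mul_le_mul_of_nonneg_left (le_abs_self _) hmy0
        _ ≤ 1 / s * |x - y| := mul_le_mul_of_nonneg_right hmy1 (abs_nonneg _)
        _ = |x - y| / s := by ring
    · have h1 : g y - g x ≤ mx * (y - x) := by
        have := hlex y hy; rw [heqx]; linarith
      calc g y - g x ≤ mx * (y - x) := h1
        _ ≤ mx * |y - x| := mul_le_mul_of_nonneg_left (le_abs_self _) hmx0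
        _ ≤ 1 / s * |y - x| := mul_le_mul_of_nonneg_right hmx1 (abs_nonneg _)
        _ = |x - y| / s := by rw [abs_sub_comm]; ring
  · intro x hx
    set r := Real.sqrt x with hrdef
    have hr0 : 0 ≤ r := Real.sqrt_nonneg x
    have hr2 : r ^ 2 = x := Real.sq_sqrt hx
    have hE2 : (2 : ℝ) < Real.exp 1 := by
      have := Real.add_one_le_exp 1
      nlinarith [Real.exp_one_gt_d9]
    have hE3 : Real.exp 1 < 3 := by nlinarith [Real.exp_one_lt_d9]
    have hEpos : (0 : ℝ) < Real.exp 1 := Real.exp_pos 1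
    have hargpos : 0 < 2 / Real.exp 1 * ε + x := by positivity
    by_cases hrs : s ≤ r
    · rw [hg_above r hrs, hr2]
      constructor
      · apply Real.log_le_log hargpos
        have : 2 / Real.exp 1 ≤ 1 := by
          rw [div_le_one hEpos]; linarith
        nlinarith
      · exact le_refl _
    · push_neg at hrs
      rw [hg_below r hr0 hrs]
      constructor
      · -- lower bound via exp
        rw [Real.log_le_iff_le_exp hargpos, Real.exp_add,
          Real.exp_log (by positivity : (0:ℝ) < 2 * ε)]
        have hts : (r - s) / s = r / s - 1 := by field_simp
        rw [hts, Real.exp_sub]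
        have ht0 : 0 ≤ r / s := by positivity
        have ht1 : r / s ≤ 1 := by rw [div_le_one hs]; linarith
        have hq := Real.quadratic_le_exp_of_nonneg ht0
        have hkey : 2 + Real.exp 1 * (r / s) ^ 2 ≤ 2 * Real.exp (r / s) := by
          nlinarith [sq_nonneg (r / s), mul_le_mul_of_nonneg_left ht1 ht0]
        have hrs2 : (r / s) ^ 2 * ε = x := by
          rw [div_pow, hs2]
          field_simp [hε.ne']
          linarith [hr2]
        have hrw : Real.exp (r / s) / Real.exp 1 * (2 * ε)
            = Real.exp (r / s) * (2 * ε) / Real.exp 1 := by ring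
        rw [hrw, le_div_iff₀ hEpos]
        have hmul := mul_le_mul_of_nonneg_right hkey hε.le
        have h2e : 2 / Real.exp 1 * Real.exp 1 = 2 := div_mul_cancel₀ 2 hEpos.ne'
        nlinarith [hmul, hrs2]
      · have := below_aux ε hε hr0 hrs.le
        rw [hr2] at this
        exact this
end

section
/- Define g̃_ε : [0,∞) → ℝ by g̃_ε(x) = 1/(ε² + x²) for x > ε/√3 and g̃_ε(x) = −(3√3)/(8ε³) · (x − ε/√3) + 3/(4ε²) for 0 ≤ x ≤ ε/√3, where ε > 0. Then g̃_ε is convex on [0,∞), and setting f̃_ε(x) := g̃_ε(√x), one has f̃_{(3/(2√2))ε}(x) ≤ 1/(ε² + x) ≤ f̃_ε(x) for all x ≥ 0. -/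
/-!
`x ↦ 1/(ε² + x²)` is concave on `[0, ε/√3]` and convex beyond; `g̃_ε = convexified ε` replaces
the concave part by the tangent at the inflection point `ε/√3`, whose slope is the minimum of the
derivative. Hence `g̃_ε` has a supporting line everywhere: that tangent on `[0, ε/√3]`, the tangent
of the curve further right. Since `g̃_ε` dominates the curve, the upper bound is immediate. For the
lower bound, with `δ² = 9ε²/8` the tangent piece of `g̃_δ` lies below `1/(ε² + s²)` because a
quadratic in `s` has negative discriminant, and `1/(δ² + s²) ≤ 1/(ε² + s²)`.
-/

open Set

theorem ConvexOn.of_forall_exists_le_add_map_sub {𝕜 E : Type*} [Field 𝕜] [LinearOrder 𝕜]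
    [IsStrictOrderedRing 𝕜] [AddCommGroup E] [Module 𝕜 E] {s : Set E} (hs : Convex 𝕜 s)
    {f : E → 𝕜} (h : ∀ y ∈ s, ∃ ℓ : E →ₗ[𝕜] 𝕜, ∀ x ∈ s, f y + ℓ (x - y) ≤ f x) :
    ConvexOn 𝕜 s f := by
  refine ⟨hs, fun x hx z hz a b ha hb hab => ?_⟩
  set p := a • x + b • z
  obtain ⟨ℓ, hℓ⟩ := h p (hs hx hz ha hb hab)
  have hp : a * ℓ x + b * ℓ z = ℓ p := by simp [p]
  calc f p = a * (f p + ℓ (x - p)) + b * (f p + ℓ (z - p)) := by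
        simp only [map_sub]; linear_combination (ℓ p - f p) * hab - hp
    _ ≤ a • f x + b • f z := by
        simp only [smul_eq_mul]
        gcongr
        exacts [hℓ x hx, hℓ z hz]

namespace ConvexifiedInvSq

variable {ε δ x y s : ℝ}

-- The paper's linear piece `-(3√3/(8ε³)) (x - ε/√3) + 3/(4ε²)`, simplified.
noncomputable def tangentLine (ε x : ℝ) : ℝ := (9 * ε - 3 * √3 * x) / (8 * ε ^ 3)

noncomputable def convexified (ε x : ℝ) : ℝ :=
  if √3 * x ≤ ε then tangentLine ε x else 1 / (ε ^ 2 + x ^ 2)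

lemma sq_sqrt_three : √3 ^ 2 = 3 := Real.sq_sqrt (by norm_num)

lemma tangentLine_mul_sub (ε x : ℝ) :
    (9 * ε - 3 * √3 * x) * (ε ^ 2 + x ^ 2) - 8 * ε ^ 3 = (ε - √3 * x) ^ 3 := by
  linear_combination (√3 * x ^ 3 - 3 * ε * x ^ 2) * sq_sqrt_three

lemma tangentLine_le_inv (hε : 0 < ε) (hx : ε ≤ √3 * x) :
    tangentLine ε x ≤ 1 / (ε ^ 2 + x ^ 2) := by
  rw [tangentLine, div_le_div_iff₀ (by positivity) (by positivity)]
  have : (ε - √3 * x) ^ 3 ≤ 0 := Odd.pow_nonpos (by decide) (by linarith)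
  linarith [tangentLine_mul_sub ε x]

lemma inv_le_tangentLine (hε : 0 < ε) (hx : √3 * x ≤ ε) :
    1 / (ε ^ 2 + x ^ 2) ≤ tangentLine ε x := by
  rw [tangentLine, div_le_div_iff₀ (by positivity) (by positivity)]
  have : 0 ≤ (ε - √3 * x) ^ 3 := pow_nonneg (by linarith) 3
  linarith [tangentLine_mul_sub ε x]

lemma tangentLine_add_mul_sub (hε : ε ≠ 0) (x y : ℝ) :
    tangentLine ε y + -(3 * √3 / (8 * ε ^ 3)) * (x - y) = tangentLine ε x := by
  unfold tangentLine
  field_simp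
  ring

lemma tangentLine_slope_le (hε : 0 < ε) (hy : 0 ≤ y) :
    -(3 * √3 / (8 * ε ^ 3)) ≤ -(2 * y) / (ε ^ 2 + y ^ 2) ^ 2 := by
  rw [neg_div, neg_le_neg_iff, div_le_div_iff₀ (by positivity) (by positivity)]
  have key : 3 * √3 * (ε ^ 2 + y ^ 2) ^ 2 - 16 * ε ^ 3 * y
      = (√3 * y - ε) ^ 2 * (√3 * y ^ 2 + 2 * ε * y + 3 * √3 * ε ^ 2) := by
    linear_combination (-(√3 * y ^ 4) - 3 * √3 * ε ^ 2 * y ^ 2 + 6 * ε ^ 3 * y) * sq_sqrt_three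
  have : 0 ≤ (√3 * y - ε) ^ 2 * (√3 * y ^ 2 + 2 * ε * y + 3 * √3 * ε ^ 2) := by positivity
  linarith

lemma inv_add_mul_sub_le_inv (hε : 0 < ε) (hx : ε ≤ √3 * x) (hy : ε ≤ √3 * y) :
    1 / (ε ^ 2 + y ^ 2) + -(2 * y) / (ε ^ 2 + y ^ 2) ^ 2 * (x - y) ≤ 1 / (ε ^ 2 + x ^ 2) := by
  have key : 1 / (ε ^ 2 + x ^ 2) - (1 / (ε ^ 2 + y ^ 2) + -(2 * y) / (ε ^ 2 + y ^ 2) ^ 2 * (x - y))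
      = (x - y) ^ 2 * (2 * x * y + y ^ 2 - ε ^ 2) / ((ε ^ 2 + x ^ 2) * (ε ^ 2 + y ^ 2) ^ 2) := by
    field_simp
    ring
  have hxy : ε ^ 2 ≤ 3 * (x * y) := by
    nlinarith [mul_le_mul hx hy hε.le (hε.le.trans hx), sq_sqrt_three]
  have hyy : ε ^ 2 ≤ 3 * (y * y) := by
    nlinarith [mul_le_mul hy hy hε.le (hε.le.trans hy), sq_sqrt_three]
  have : 0 ≤ (x - y) ^ 2 * (2 * x * y + y ^ 2 - ε ^ 2) / ((ε ^ 2 + x ^ 2) * (ε ^ 2 + y ^ 2) ^ 2) :=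
    div_nonneg (mul_nonneg (sq_nonneg _) (by linarith)) (by positivity)
  linarith

lemma tangentLine_le_convexified (hε : 0 < ε) (x : ℝ) : tangentLine ε x ≤ convexified ε x := by
  unfold convexified
  split_ifs with hx
  · exact le_rfl
  · exact tangentLine_le_inv hε (not_le.1 hx).le

lemma inv_le_convexified (hε : 0 < ε) (x : ℝ) : 1 / (ε ^ 2 + x ^ 2) ≤ convexified ε x := by
  unfold convexified
  split_ifs with hx
  · exact inv_le_tangentLine hε hx
  · exact le_rfl


lemma convexOn_convexified (hε : 0 < ε) : ConvexOn ℝ (Ici 0) (convexified ε) := by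
  refine .of_forall_exists_le_add_map_sub (convex_Ici 0) fun y hy => ?_
  by_cases hyε : √3 * y ≤ ε
  · refine ⟨LinearMap.mulLeft ℝ (-(3 * √3 / (8 * ε ^ 3))), fun x _ => ?_⟩
    rw [LinearMap.mulLeft_apply, convexified, if_pos hyε, tangentLine_add_mul_sub hε.ne']
    exact tangentLine_le_convexified hε x
  refine ⟨LinearMap.mulLeft ℝ (-(2 * y) / (ε ^ 2 + y ^ 2) ^ 2), fun x _ => ?_⟩
  rw [LinearMap.mulLeft_apply, convexified, if_neg hyε]
  rw [not_le] at hyε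
  by_cases hxε : ε ≤ √3 * x
  · exact (inv_add_mul_sub_le_inv hε hxε hyε.le).trans (inv_le_convexified hε x)
  -- Below `c = ε / √3` the tangent at `y` stays under the tangent at `c`, whose slope is smaller.
  set c := ε / √3
  have hc : √3 * c = ε := mul_div_cancel₀ ε (by positivity)
  have hxc : x < c := lt_of_mul_lt_mul_left (hc ▸ not_le.1 hxε) (by positivity)
  calc 1 / (ε ^ 2 + y ^ 2) + -(2 * y) / (ε ^ 2 + y ^ 2) ^ 2 * (x - y)
      = 1 / (ε ^ 2 + y ^ 2) + -(2 * y) / (ε ^ 2 + y ^ 2) ^ 2 * (c - y)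
        + -(2 * y) / (ε ^ 2 + y ^ 2) ^ 2 * (x - c) := by ring
    _ ≤ 1 / (ε ^ 2 + c ^ 2) + -(3 * √3 / (8 * ε ^ 3)) * (x - c) := by
      gcongr ?_ + ?_
      · exact inv_add_mul_sub_le_inv hε hc.ge hyε.le
      · exact mul_le_mul_of_nonpos_right (tangentLine_slope_le hε hy) (by linarith)
    _ ≤ tangentLine ε c + -(3 * √3 / (8 * ε ^ 3)) * (x - c) := by
      gcongr
      exact inv_le_tangentLine hε hc.le
    _ = tangentLine ε x := tangentLine_add_mul_sub hε.ne' x c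
    _ ≤ convexified ε x := tangentLine_le_convexified hε x

lemma tangentLine_le_inv_of_eight_mul_sq (hδ : 0 < δ) (hεδ : 8 * δ ^ 2 = 9 * ε ^ 2) (hs : 0 ≤ s) :
    tangentLine δ s ≤ 1 / (ε ^ 2 + s ^ 2) := by
  have hε : 0 < ε ^ 2 := by nlinarith
  rw [tangentLine, div_le_div_iff₀ (by positivity) (by positivity)]
  have key : (9 * δ - 3 * √3 * s) * (ε ^ 2 + s ^ 2) - 8 * δ ^ 3
      = -(3 * √3 * s) * ((s - √3 * δ / 2) ^ 2 + (ε ^ 2 - 3 * δ ^ 2 / 4)) := by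
    linear_combination (-δ) * hεδ + (3 * √3 * δ ^ 2 * s / 4 - 3 * δ * s ^ 2) * sq_sqrt_three
  have : 0 ≤ 3 * √3 * s * ((s - √3 * δ / 2) ^ 2 + (ε ^ 2 - 3 * δ ^ 2 / 4)) := by
    have : 0 ≤ ε ^ 2 - 3 * δ ^ 2 / 4 := by nlinarith
    positivity
  linarith

lemma convexified_le_inv (hδ : 0 < δ) (hεδ : 8 * δ ^ 2 = 9 * ε ^ 2) (hs : 0 ≤ s) :
    convexified δ s ≤ 1 / (ε ^ 2 + s ^ 2) := by
  unfold convexified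
  split_ifs
  · exact tangentLine_le_inv_of_eight_mul_sq hδ hεδ hs
  · have : 0 < ε ^ 2 := by nlinarith
    exact one_div_le_one_div_of_le (by positivity) (by nlinarith)

end ConvexifiedInvSq

open ConvexifiedInvSq

theorem stmt_14 (G : ℝ → ℝ → ℝ)
    (hG_above : ∀ ε : ℝ, 0 < ε → ∀ x : ℝ, ε / Real.sqrt 3 < x →
      G ε x = 1 / (ε ^ 2 + x ^ 2))
    (hG_below : ∀ ε : ℝ, 0 < ε → ∀ x : ℝ, 0 ≤ x → x ≤ ε / Real.sqrt 3 →
      G ε x = -(3 * Real.sqrt 3 / (8 * ε ^ 3)) * (x - ε / Real.sqrt 3)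
                + 3 / (4 * ε ^ 2)) :
    ∀ ε : ℝ, 0 < ε →
      ConvexOn ℝ (Set.Ici (0 : ℝ)) (G ε) ∧
      (∀ x : ℝ, 0 ≤ x →
        G (3 / (2 * Real.sqrt 2) * ε) (Real.sqrt x) ≤ 1 / (ε ^ 2 + x) ∧
        1 / (ε ^ 2 + x) ≤ G ε (Real.sqrt x)) := by
  have hG : ∀ δ, 0 < δ → EqOn (G δ) (convexified δ) (Ici 0) := by
    intro δ hδ x hx
    have h3 : (0 : ℝ) < √3 := by positivity
    unfold convexified
    split_ifs with hxδ
    · rw [hG_below δ hδ x hx ((le_div_iff₀' h3).2 hxδ), tangentLine]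
      field_simp
      ring
    · exact hG_above δ hδ x ((div_lt_iff₀' h3).2 (not_le.1 hxδ))
  intro ε hε
  refine ⟨(convexOn_convexified hε).congr (hG ε hε).symm, fun x hx => ⟨?_, ?_⟩⟩
  · set δ := 3 / (2 * √2) * ε
    have hδ : 0 < δ := by positivity
    have hδε : 8 * δ ^ 2 = 9 * ε ^ 2 := by
      simp only [δ, mul_pow, div_pow, Real.sq_sqrt (show (0 : ℝ) ≤ 2 by norm_num)]
      ring
    rw [hG δ hδ (Real.sqrt_nonneg x)]
    simpa only [Real.sq_sqrt hx] using convexified_le_inv hδ hδε (Real.sqrt_nonneg x)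
  · rw [hG ε hε (Real.sqrt_nonneg x)]
    simpa only [Real.sq_sqrt hx] using inv_le_convexified hε √x
end
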